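/- Let n ≥ 3 and let A be the complex algebra with basis e_1, e_2, …, e_n and multiplication e_i ⋄ e_j = (i/(j+1))·e_{i+j} if i+j ≤ n and e_i ⋄ e_j = 0 otherwise (the algebra IDD(K^1_n, 1, −1)). Then Der(A) is the three-dimensional linear span of the derivations φ, ϕ_1, ϕ_2 defined on the basis by: φ(e_i) = i·e_i for 1 ≤ i ≤ n; ϕ_1(e_1) = n·e_{n−1}, ϕ_1(e_2) = (n²−n+2)·e_n, and ϕ_1(e_k) = 0 for k ≥ 3; ϕ_2(e_1) = e_n and ϕ_2(e_k) = 0 for k ≥ 2. -/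

import Mathlib

/-- The basis index set `{1, …, n}`. -/
abbrev Ix (n : ℕ) := ↥(Finset.Icc 1 n)

/-- The vector space with basis `e_1, …, e_n`; the `p`-th coordinate of a vector is its
coefficient at `e_p` (so `e_i = Pi.single i 1`). -/
abbrev V (n : ℕ) := Ix n → ℂ

/-- The multiplication of `IDD(K^1_n, 1, −1)`: `e_i ⋄ e_j = (i/(j+1))·e_{i+j}` if `i+j ≤ n` and `0` otherwise. -/
noncomputable def mulA (n : ℕ) (x y : V n) : V n := fun p =>
  ∑ i : Ix n, ∑ j : Ix n, x i * y j * (if i.1 + j.1 = p.1 then (i.1 : ℂ) * ((j.1 : ℂ) + 1)⁻¹ else 0)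

/-- `D` is a derivation of `IDD(K^1_n, 1, −1)`. -/
def IsDer (n : ℕ) (D : V n →ₗ[ℂ] V n) : Prop :=
  ∀ x y, D (mulA n x y) = mulA n (D x) y + mulA n x (D y)

/-- The derivation `φ(e_i) = i·e_i`. -/
noncomputable def phiD (n : ℕ) : V n →ₗ[ℂ] V n :=
  Matrix.mulVecLin (fun p s : Ix n => if p = s then (s.1 : ℂ) else 0)

/-- The derivation `ϕ_1(e_1) = n·e_{n−1}`, `ϕ_1(e_2) = (n²−n+2)·e_n`, and `ϕ_1(e_k) = 0` for `k ≥ 3`. -/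
noncomputable def phi1D (n : ℕ) : V n →ₗ[ℂ] V n :=
  Matrix.mulVecLin (fun p s : Ix n => if s.1 = 1 ∧ p.1 = n - 1 then (n : ℂ) else if s.1 = 2 ∧ p.1 = n then (n : ℂ) ^ 2 - (n : ℂ) + 2 else 0)

/-- The derivation `ϕ_2(e_1) = e_n`, `ϕ_2(e_k) = 0` for `k ≥ 2`. -/
noncomputable def phi2D (n : ℕ) : V n →ₗ[ℂ] V n :=
  Matrix.mulVecLin (fun p s : Ix n => if s.1 = 1 ∧ p.1 = n then 1 else 0)


/-
Write `d p s` for the coefficient of `e_p` in `D e_s`. On basis vectors the Leibniz rule is a linear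
identity among the `d p s`. Its instance for `e_1 ⋄ e_s` expresses `d p (s + 1)` through
`d (p - s) 1` and `d (p - 1) s`; this recursion kills everything above the diagonal, and the
instance for `e_s ⋄ e_1` makes the diagonal `s · d 1 1`. Three instances around `(t, 1)` give
`(t - 1) t (t² + 3t - 2) · d t 1 = 0`, so column `1` vanishes except at rows `1`, `n - 1`, `n`; the
recursion then kills the rest below the diagonal except `d n 2 = (n² - n + 2)/n · d (n - 1) 1`.
Hence a derivation is determined by `d 1 1`, `d (n - 1) 1`, `d n 1`, and `φ`, `ϕ₁`, `ϕ₂` realize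
these three values independently.
-/

open Finset

section

variable {R M : Type*} [CommSemiring R] [AddCommMonoid M] [Module R M]

def LinearMap.derivationSubmodule (B : M →ₗ[R] M →ₗ[R] M) : Submodule R (M →ₗ[R] M) where
  carrier := {D | ∀ x y, D (B x y) = B (D x) y + B x (D y)}
  zero_mem' := by simp
  add_mem' {D₁ D₂} h₁ h₂ x y := by
    simp only [LinearMap.add_apply, h₁ x y, h₂ x y, map_add]
    abel
  smul_mem' c D h x y := by simp [h x y]

theorem LinearMap.mem_derivationSubmodule {B : M →ₗ[R] M →ₗ[R] M} {D : M →ₗ[R] M} :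
    D ∈ B.derivationSubmodule ↔ ∀ x y, D (B x y) = B (D x) y + B x (D y) :=
  Iff.rfl

theorem LinearMap.mem_derivationSubmodule_iff_basis {ι : Type*} (b : Module.Basis ι R M)
    (B : M →ₗ[R] M →ₗ[R] M) (D : M →ₗ[R] M) :
    D ∈ B.derivationSubmodule ↔ ∀ i j, D (B (b i) (b j)) = B (D (b i)) (b j) + B (b i) (D (b j)) :=
  LinearMap.mem_derivationSubmodule.trans ⟨fun h _ _ => h _ _, fun h => LinearMap.congr_fun₂
    (LinearMap.ext_basis b b (B := B.compr₂ D) (B' := B.comp D + B.compl₂ D) h)⟩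

end

noncomputable section

namespace IDD

variable {n : ℕ}

def structConst (i j : ℕ) : ℂ := i * ((j : ℂ) + 1)⁻¹

def basisVec (n s : ℕ) : V n := fun q => if (q : ℕ) = s then 1 else 0

/- Coordinates and matrix entries are indexed by `ℕ` and extended by zero outside `{1, …, n}`, so
that the index arithmetic of the derivation identity needs no side conditions: a truncated
`p - j = 0` lands on the zero row. `entry D p s` is the coefficient of `e_p` in `D e_s`. -/
def coord (v : V n) (k : ℕ) : ℂ := if h : k ∈ Icc 1 n then v ⟨k, h⟩ else 0

def entry (D : V n →ₗ[ℂ] V n) (p s : ℕ) : ℂ := coord (D (basisVec n s)) p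

lemma basisVec_val (s : Ix n) : basisVec n s = Pi.single s 1 := by
  ext q
  simp only [basisVec, Pi.single_apply, Subtype.ext_iff]

lemma coord_val (v : V n) (k : Ix n) : coord v k = v k := by
  rw [coord, dif_pos k.2]

lemma basisVec_eq_zero {s : ℕ} (h : s ∉ Icc 1 n) : basisVec n s = 0 := by
  ext q
  simp [basisVec, show (q : ℕ) ≠ s from fun hq => h (hq ▸ q.2)]

lemma entry_zero_row (D : V n →ₗ[ℂ] V n) (s : ℕ) : entry D 0 s = 0 := by
  rw [entry, coord, dif_neg (by rw [mem_Icc]; omega)]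

lemma entry_of_lt_col (D : V n →ₗ[ℂ] V n) (p : ℕ) {s : ℕ} (h : n < s) : entry D p s = 0 := by
  rw [entry, basisVec_eq_zero (by rw [mem_Icc]; omega), map_zero]
  unfold coord; split_ifs <;> rfl

lemma entry_zero (p s : ℕ) : entry (0 : V n →ₗ[ℂ] V n) p s = 0 := by
  unfold entry coord; split_ifs <;> simp

lemma entry_add (D D' : V n →ₗ[ℂ] V n) (p s : ℕ) :
    entry (D + D') p s = entry D p s + entry D' p s := by
  unfold entry coord; split_ifs <;> simp

lemma entry_smul (c : ℂ) (D : V n →ₗ[ℂ] V n) (p s : ℕ) : entry (c • D) p s = c * entry D p s := by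
  unfold entry coord; split_ifs <;> simp

lemma entry_sub (D D' : V n →ₗ[ℂ] V n) (p s : ℕ) :
    entry (D - D') p s = entry D p s - entry D' p s := by
  unfold entry coord; split_ifs <;> simp

lemma sum_mul_ite_add_eq_coord (v : V n) (w : ℕ → ℂ) (j p : ℕ) :
    ∑ k : Ix n, v k * (if k.1 + j = p then w k else 0) = coord v (p - j) * w (p - j) := by
  by_cases h : p - j ∈ Icc 1 n
  · have hpj := mem_Icc.1 h
    rw [Fintype.sum_eq_single ⟨p - j, h⟩ fun k hk => ?_, coord, dif_pos h, if_pos (by dsimp; omega)]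
    rw [if_neg fun hkp => hk (Subtype.ext (by dsimp; omega)), mul_zero]
  · rw [coord, dif_neg h, zero_mul]
    refine Finset.sum_eq_zero fun k _ => ?_
    have hk := mem_Icc.1 k.2
    rw [if_neg fun hkp => h (mem_Icc.2 (by omega)), mul_zero]

lemma coord_basisVec (s : Ix n) (k : ℕ) : coord (basisVec n s) k = if k = s then 1 else 0 := by
  by_cases hk : k ∈ Icc 1 n
  · simp [coord, hk, basisVec]
  · rw [coord, dif_neg hk, if_neg fun h : k = s => hk (h ▸ s.2)]

lemma mulA_basisVec_right (x : V n) (j p : Ix n) :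
    mulA n x (basisVec n j) p = structConst (p - j) j * coord x (p - j) := by
  rw [mul_comm, ← sum_mul_ite_add_eq_coord x (fun k => structConst k j)]
  refine Finset.sum_congr rfl fun i _ => ?_
  rw [Fintype.sum_eq_single j fun b hb => by simp [basisVec, Subtype.coe_ne_coe.2 hb]]
  simp [basisVec, structConst]

lemma mulA_basisVec_left (y : V n) (i p : Ix n) :
    mulA n (basisVec n i) y p = structConst i (p - i) * coord y (p - i) := by
  rw [mul_comm, ← sum_mul_ite_add_eq_coord y (fun k => structConst i k), mulA,
    Fintype.sum_eq_single i fun b hb => by simp [basisVec, Subtype.coe_ne_coe.2 hb]]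
  simp [basisVec, structConst, add_comm]

lemma mulA_basisVec_basisVec (i j : Ix n) :
    mulA n (basisVec n i) (basisVec n j) = structConst i j • basisVec n (i + j) := by
  ext p
  have hj := (Finset.mem_Icc.1 j.2).1
  rw [mulA_basisVec_left, coord_basisVec]
  by_cases h : (p : ℕ) = i + j
  · simp [basisVec, h]
  · simp [basisVec, h, show (p : ℕ) - i ≠ j by omega]

def mulL (n : ℕ) : V n →ₗ[ℂ] V n →ₗ[ℂ] V n :=
  LinearMap.mk₂ ℂ (mulA n)
    (fun x x' y => by ext p; simp only [mulA, Pi.add_apply, add_mul, sum_add_distrib])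
    (fun c x y => by ext p; simp [mulA, mul_sum, mul_assoc])
    (fun x y y' => by ext p; simp only [mulA, Pi.add_apply, mul_add, add_mul, sum_add_distrib])
    (fun c x y => by ext p; simp [mulA, mul_sum, mul_left_comm, mul_assoc])

lemma isDer_iff_mem_derivationSubmodule (D : V n →ₗ[ℂ] V n) :
    IsDer n D ↔ D ∈ (mulL n).derivationSubmodule :=
  Iff.rfl

lemma isDer_iff_basisVec (D : V n →ₗ[ℂ] V n) :
    IsDer n D ↔ ∀ i j p : Ix n, D (mulA n (basisVec n i) (basisVec n j)) p =
      mulA n (D (basisVec n i)) (basisVec n j) p + mulA n (basisVec n i) (D (basisVec n j)) p := by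
  rw [isDer_iff_mem_derivationSubmodule,
    LinearMap.mem_derivationSubmodule_iff_basis (Pi.basisFun ℂ (Ix n))]
  simp [funext_iff, mulL, basisVec_val]

theorem isDer_iff (D : V n →ₗ[ℂ] V n) :
    IsDer n D ↔ ∀ i j p : ℕ, 1 ≤ i ∧ i ≤ n → 1 ≤ j ∧ j ≤ n → 1 ≤ p ∧ p ≤ n →
      structConst i j * entry D p (i + j) =
        structConst (p - j) j * entry D (p - j) i + structConst i (p - i) * entry D (p - i) j := by
  have key : ∀ i j p : Ix n,
      D (mulA n (basisVec n i) (basisVec n j)) p = structConst i j * entry D p (i + j) := by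
    intro i j p
    rw [mulA_basisVec_basisVec, map_smul, entry, coord_val]
    rfl
  simp only [isDer_iff_basisVec, key, mulA_basisVec_left, mulA_basisVec_right]
  constructor
  · intro h i j p hi hj hp
    exact h ⟨i, mem_Icc.2 hi⟩ ⟨j, mem_Icc.2 hj⟩ ⟨p, mem_Icc.2 hp⟩
  · intro h i j p
    exact h i j p (mem_Icc.1 i.2) (mem_Icc.1 j.2) (mem_Icc.1 p.2)

variable {D : V n →ₗ[ℂ] V n}

lemma entry_succ_of_isDer (hD : IsDer n D) {p s : ℕ} (hs : 1 ≤ s) (hsn : s + 1 ≤ n)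
    (hp : 1 ≤ p) (hpn : p ≤ n) :
    (p : ℂ) * entry D p (s + 1) =
      ((p - s : ℕ) : ℂ) * p * entry D (p - s) 1 + (s + 1) * entry D (p - 1) s := by
  have h := (isDer_iff D).1 hD 1 s p (by omega) (by omega) (by omega)
  have hp' : ((p - 1 : ℕ) : ℂ) + 1 = p := by rw [Nat.cast_sub hp]; ring
  have hp0 : (p : ℂ) ≠ 0 := by exact_mod_cast (by omega : p ≠ 0)
  have hs0 : (s : ℂ) + 1 ≠ 0 := by exact_mod_cast (by omega : s + 1 ≠ 0)
  simp only [structConst, hp', add_comm 1 s, Nat.cast_one, one_mul] at h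
  field_simp at h
  linear_combination h

lemma entry_eq_zero_of_lt_of_isDer (hD : IsDer n D) {p s : ℕ} (h : p < s) : entry D p s = 0 := by
  induction s generalizing p with
  | zero => omega
  | succ s ih =>
    rcases Nat.eq_zero_or_pos p with rfl | hp
    · exact entry_zero_row D _
    by_cases hsn : n < s + 1
    · exact entry_of_lt_col D p hsn
    have hrec := entry_succ_of_isDer hD (p := p) (s := s) (by omega) (by omega) hp (by omega)
    rw [Nat.sub_eq_zero_of_le (by omega), entry_zero_row, ih (by omega)] at hrec
    have hp0 : (p : ℂ) ≠ 0 := by exact_mod_cast hp.ne'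
    simpa [hp0] using hrec

lemma entry_diag_of_isDer (hD : IsDer n D) {s : ℕ} (hs : 1 ≤ s) (hsn : s ≤ n) :
    entry D s s = s * entry D 1 1 := by
  induction s, hs using Nat.le_induction with
  | base => simp
  | succ s hs ih =>
    have h := (isDer_iff D).1 hD s 1 (s + 1) (by omega) (by omega) (by omega)
    rw [Nat.add_sub_cancel, Nat.add_sub_cancel_left, ← mul_add] at h
    have hstructConst : structConst s 1 ≠ 0 := by simp [structConst]; omega
    rw [mul_left_cancel₀ hstructConst h, ih (by omega)]
    push_cast
    ring

lemma entry_col_one_of_isDer (hD : IsDer n D) {t : ℕ} (ht : 2 ≤ t) (htn : t + 2 ≤ n) :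
    entry D t 1 = 0 := by
  obtain ⟨u, rfl⟩ : ∃ u, t = u + 2 := ⟨t - 2, by omega⟩
  have e₁ := entry_succ_of_isDer hD (p := u + 3) (s := 1) le_rfl (by omega) (by omega) (by omega)
  have e₂ := entry_succ_of_isDer hD (p := u + 4) (s := 2) (by omega) (by omega) (by omega) htn
  have e₃ := (isDer_iff D).1 hD 2 1 (u + 4) (by omega) (by omega) (by omega)
  simp only [show u + 3 - 1 = u + 2 by omega, show u + 4 - 2 = u + 2 by omega,
    show u + 4 - 1 = u + 3 by omega, structConst] at e₁ e₂ e₃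
  push_cast at e₁ e₂ e₃
  have hu : (u : ℂ) + 2 + 1 ≠ 0 := by exact_mod_cast (by omega : u + 2 + 1 ≠ 0)
  field_simp at e₃
  -- with `t = u + 2`, eliminating `entry D (t+1) 2` and `entry D (t+2) 3` leaves
  -- `(t-1) t (t²+3t-2) * entry D t 1 = 0`
  have key : (((u + 1) * (u + 2) * (u ^ 2 + 7 * u + 8) : ℕ) : ℂ) * entry D (u + 2) 1 = 0 := by
    push_cast
    linear_combination (-((u:ℂ) + 4)) * e₃ + 2 * ((u:ℂ) + 3) * e₂ - ((u:ℂ) ^ 2 + 7 * u + 6) * e₁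
  exact (mul_eq_zero.1 key).resolve_left (Nat.cast_ne_zero.2 (by positivity))

/- `p + 3 ≤ n + s` excludes, among the entries strictly below the diagonal off column one, exactly
`(n, 2)`, which is tied to `entry D (n - 1) 1` instead. -/
lemma entry_eq_zero_of_isDer (hD : IsDer n D) {p s : ℕ} (hs : 2 ≤ s) (hsp : s < p) (hpn : p ≤ n)
    (hps : p + 3 ≤ n + s) : entry D p s = 0 := by
  induction s, hs using Nat.le_induction generalizing p with
  | base =>
    have h := entry_succ_of_isDer hD (p := p) (s := 1) le_rfl (by omega) (by omega) hpn
    rw [entry_col_one_of_isDer hD (t := p - 1) (by omega) (by omega)] at h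
    have hp0 : (p : ℂ) ≠ 0 := by exact_mod_cast (by omega : p ≠ 0)
    simpa [hp0] using h
  | succ s hs ih =>
    have h := entry_succ_of_isDer hD (p := p) (s := s) (by omega) (by omega) (by omega) hpn
    rw [entry_col_one_of_isDer hD (t := p - s) (by omega) (by omega),
      ih (by omega) (by omega) (by omega)] at h
    have hp0 : (p : ℂ) ≠ 0 := by exact_mod_cast (by omega : p ≠ 0)
    simpa [hp0] using h

lemma entry_last_two_of_isDer (hD : IsDer n D) (hn : 3 ≤ n) :
    (n : ℂ) * entry D n 2 = ((n : ℂ) ^ 2 - n + 2) * entry D (n - 1) 1 := by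
  have h := entry_succ_of_isDer hD (p := n) (s := 1) le_rfl (by omega) (by omega) le_rfl
  rw [Nat.cast_sub (by omega)] at h
  linear_combination h

lemma eq_zero_of_entry_eq_zero (h : ∀ p s : ℕ, 1 ≤ p ∧ p ≤ n → 1 ≤ s ∧ s ≤ n → entry D p s = 0) :
    D = 0 := by
  refine (Pi.basisFun ℂ (Ix n)).ext fun s => funext fun p => ?_
  have := h p s (mem_Icc.1 p.2) (mem_Icc.1 s.2)
  rw [entry, basisVec_val, coord_val] at this
  simpa using this

lemma eq_zero_of_isDer (hD : IsDer n D) (hn : 3 ≤ n) (h₁ : entry D 1 1 = 0)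
    (h₂ : entry D (n - 1) 1 = 0) (h₃ : entry D n 1 = 0) : D = 0 := by
  refine eq_zero_of_entry_eq_zero fun p s hp hs => ?_
  rcases lt_trichotomy p s with hps | rfl | hsp
  · exact entry_eq_zero_of_lt_of_isDer hD hps
  · rw [entry_diag_of_isDer hD hp.1 hp.2, h₁, mul_zero]
  obtain rfl | hs2 := (by omega : s = 1 ∨ 2 ≤ s)
  · obtain hpn | rfl | rfl := (by omega : p + 2 ≤ n ∨ p = n - 1 ∨ p = n)
    exacts [entry_col_one_of_isDer hD hsp hpn, h₂, h₃]
  obtain hpn | ⟨rfl, rfl⟩ := (by omega : p + 3 ≤ n + s ∨ p = n ∧ s = 2)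
  · exact entry_eq_zero_of_isDer hD hs2 hsp hp.2 hpn
  have h := entry_last_two_of_isDer hD hn
  rw [h₂, mul_zero] at h
  have hn0 : (p : ℂ) ≠ 0 := by exact_mod_cast (by omega : p ≠ 0)
  exact (mul_eq_zero.1 h).resolve_left hn0

lemma entry_mulVecLin (M : Ix n → Ix n → ℂ) (p s : ℕ) :
    entry (Matrix.mulVecLin M) p s =
      if h : p ∈ Icc 1 n ∧ s ∈ Icc 1 n then M ⟨p, h.1⟩ ⟨s, h.2⟩ else 0 := by
  by_cases hs : s ∈ Icc 1 n
  · have hb : basisVec n s = Pi.single ⟨s, hs⟩ 1 := basisVec_val ⟨s, hs⟩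
    by_cases hp : p ∈ Icc 1 n
    · rw [entry, hb]
      -- `M` is not syntactically a `Matrix`, so the `mulVecLin` API does not rewrite here
      change coord (fun q => ∑ j, M q j * (Pi.single (⟨s, hs⟩ : Ix n) (1 : ℂ) : V n) j) p = _
      simp [coord, hp, hs, Pi.single_apply]
    · simp [entry, coord, hp]
  · rw [entry, basisVec_eq_zero hs, map_zero, dif_neg (by tauto)]
    unfold coord; split_ifs <;> rfl

lemma entry_phiD (p s : ℕ) : entry (phiD n) p s = if p = s ∧ 1 ≤ s ∧ s ≤ n then (s : ℂ) else 0 := by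
  rw [phiD, entry_mulVecLin]
  by_cases h : p ∈ Icc 1 n ∧ s ∈ Icc 1 n
  · rw [dif_pos h]
    simp only [mem_Icc, Subtype.mk.injEq] at h ⊢
    split_ifs <;> first | rfl | (exfalso; omega)
  · simp only [mem_Icc] at h
    rw [dif_neg (by simpa using h), if_neg (by omega)]

lemma entry_phi1D (hn : 2 ≤ n) (p s : ℕ) : entry (phi1D n) p s =
    if s = 1 ∧ p = n - 1 then (n : ℂ) else if s = 2 ∧ p = n then (n : ℂ) ^ 2 - n + 2 else 0 := by
  rw [phi1D, entry_mulVecLin]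
  split_ifs <;> simp_all
  omega

lemma entry_phi2D (hn : 1 ≤ n) (p s : ℕ) :
    entry (phi2D n) p s = if s = 1 ∧ p = n then 1 else 0 := by
  rw [phi2D, entry_mulVecLin]
  split_ifs <;> simp_all

lemma isDer_phiD : IsDer n (phiD n) := by
  rw [isDer_iff]
  intro i j p hi hj hp
  simp only [entry_phiD]
  by_cases hc : p = i + j
  · subst hc
    rw [Nat.add_sub_cancel, Nat.add_sub_cancel_left, if_pos (by omega), if_pos (by omega),
      if_pos (by omega)]
    simp only [structConst]
    push_cast
    ring
  · rw [if_neg (by omega), if_neg (by omega), if_neg (by omega)]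
    ring

lemma isDer_phi1D (hn : 2 ≤ n) : IsDer n (phi1D n) := by
  rw [isDer_iff]
  intro i j p hi hj hp
  simp only [entry_phi1D hn]
  by_cases hc : i = 1 ∧ j = 1 ∧ p = n
  · obtain ⟨rfl, rfl, rfl⟩ := hc
    rw [if_neg (by omega), if_pos (by omega), if_pos (by omega)]
    simp only [structConst, Nat.cast_sub hp.1, Nat.cast_one, sub_add_cancel]
    have hp0 : (p : ℂ) ≠ 0 := by exact_mod_cast (by omega : p ≠ 0)
    field_simp
    ring
  · split_ifs <;> first | (exfalso; omega) | ring

lemma isDer_phi2D (hn : 1 ≤ n) : IsDer n (phi2D n) := by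
  rw [isDer_iff]
  intro i j p hi hj hp
  simp only [entry_phi2D hn]
  split_ifs <;> first | (exfalso; omega) | ring

lemma entry_combination (hn : 3 ≤ n) (a b c : ℂ) :
    entry (a • phiD n + b • phi1D n + c • phi2D n) 1 1 = a ∧
      entry (a • phiD n + b • phi1D n + c • phi2D n) (n - 1) 1 = n * b ∧
      entry (a • phiD n + b • phi1D n + c • phi2D n) n 1 = c := by
  have h₁ : n - 1 ≠ 1 := by omega
  have h₂ : n - 1 ≠ n := by omega
  have h₃ : n ≠ 1 := by omega
  have h₄ : n ≠ 0 := by omega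
  simp [entry_add, entry_smul, entry_phiD, entry_phi1D (by omega : 2 ≤ n),
    entry_phi2D (by omega : 1 ≤ n), h₁, h₂, h₃, h₄, h₁.symm, h₂.symm, h₃.symm, mul_comm]

lemma derivationSubmodule_eq_span (hn : 3 ≤ n) :
    (mulL n).derivationSubmodule = Submodule.span ℂ {phiD n, phi1D n, phi2D n} := by
  have hle : Submodule.span ℂ {phiD n, phi1D n, phi2D n} ≤ (mulL n).derivationSubmodule := by
    refine Submodule.span_le.2 ?_
    rintro _ (rfl | rfl | rfl)
    exacts [isDer_phiD, isDer_phi1D (by omega), isDer_phi2D (by omega)]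
  refine le_antisymm (fun D hD => ?_) hle
  obtain ⟨h₁, h₂, h₃⟩ :=
    entry_combination hn (entry D 1 1) (entry D (n - 1) 1 / n) (entry D n 1)
  set E := entry D 1 1 • phiD n + (entry D (n - 1) 1 / n) • phi1D n + entry D n 1 • phi2D n
  have hE : E ∈ Submodule.span ℂ {phiD n, phi1D n, phi2D n} := by
    refine add_mem (add_mem ?_ ?_) ?_ <;>
      exact Submodule.smul_mem _ _ (Submodule.subset_span (by simp))
  have hn0 : (n : ℂ) ≠ 0 := by exact_mod_cast (by omega : n ≠ 0)
  have : D - E = 0 := eq_zero_of_isDer (sub_mem hD (hle hE)) hn (by simp [entry_sub, h₁])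
    (by simp [entry_sub, h₂, mul_div_cancel₀ _ hn0]) (by simp [entry_sub, h₃])
  rwa [sub_eq_zero.1 this]

lemma linearIndependent_phiD_phi1D_phi2D (hn : 3 ≤ n) :
    LinearIndependent ℂ ![phiD n, phi1D n, phi2D n] := by
  refine Fintype.linearIndependent_iff.2 fun g hg => ?_
  replace hg : g 0 • phiD n + g 1 • phi1D n + g 2 • phi2D n = 0 := by
    simpa [Fin.sum_univ_three] using hg
  obtain ⟨h₁, h₂, h₃⟩ := entry_combination hn (g 0) (g 1) (g 2)
  simp only [hg, entry_zero] at h₁ h₂ h₃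
  have hn0 : (n : ℂ) ≠ 0 := by exact_mod_cast (by omega : n ≠ 0)
  intro i
  fin_cases i
  exacts [h₁.symm, (mul_eq_zero.1 h₂.symm).resolve_left hn0, h₃.symm]

end IDD

end

theorem stmt17 (n : ℕ) (hn : 3 ≤ n) :
    {D : V n →ₗ[ℂ] V n | IsDer n D}
      = (Submodule.span ℂ {phiD n, phi1D n, phi2D n} : Submodule ℂ (V n →ₗ[ℂ] V n))
    ∧ LinearIndependent ℂ ![phiD n, phi1D n, phi2D n] :=
  ⟨congrArg SetLike.coe (IDD.derivationSubmodule_eq_span hn),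
    IDD.linearIndependent_phiD_phi1D_phi2D hn⟩
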